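/- Let R be a commutative ring with 1, let M be an R-module, and let n ≥ 3. There is a well-defined R-linear map i : Sym²(⋀²M) ⊗ Sym²(Sym^{n−2}M) → Sym²(Sym^n M) determined by i(((x₁∧y₁)·(x₂∧y₂)) ⊗ ((a₁·⋯·a_{n−2})·(b₁·⋯·b_{n−2}))) = (x₁·y₂·a₁·⋯·a_{n−2})·(x₂·y₁·b₁·⋯·b_{n−2}) + (x₂·y₁·a₁·⋯·a_{n−2})·(x₁·y₂·b₁·⋯·b_{n−2}) − (x₁·x₂·a₁·⋯·a_{n−2})·(y₁·y₂·b₁·⋯·b_{n−2}) − (y₁·y₂·a₁·⋯·a_{n−2})·(x₁·x₂·b₁·⋯·b_{n−2}) for all x₁,y₁,x₂,y₂,a_j,b_j ∈ M, and the composite q ∘ i is the zero map, where q : Sym²(Sym^n M) → Sym^{2n} M is the canonical surjection induced by the identity of M^{⊗2n}. -/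

import Mathlib

open scoped TensorProduct

/-- The submodule of relations defining the symmetric power: differences of pure tensors
related by a permutation of the factors. -/
def symRel (R : Type*) [CommRing R] (n : ℕ) (M : Type*) [AddCommGroup M] [Module R M] :
    Submodule R (⨂[R]^n M) :=
  Submodule.span R {x | ∃ (σ : Equiv.Perm (Fin n)) (v : Fin n → M),
    x = PiTensorProduct.tprod R v - PiTensorProduct.tprod R (v ∘ σ)}

/-- The `n`-th symmetric power of the `R`-module `M`: the quotient of the `n`-fold tensor
power by the permutation action of the symmetric group. -/
def SymPow (R : Type*) [CommRing R] (n : ℕ) (M : Type*) [AddCommGroup M] [Module R M] :=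
  (⨂[R]^n M) ⧸ symRel R n M

noncomputable instance (R : Type*) [CommRing R] (n : ℕ) (M : Type*) [AddCommGroup M] [Module R M] :
    AddCommGroup (SymPow R n M) :=
  inferInstanceAs (AddCommGroup ((⨂[R]^n M) ⧸ symRel R n M))

noncomputable instance (R : Type*) [CommRing R] (n : ℕ) (M : Type*) [AddCommGroup M] [Module R M] :
    Module R (SymPow R n M) :=
  inferInstanceAs (Module R ((⨂[R]^n M) ⧸ symRel R n M))

/-- The canonical quotient map from the tensor power to the symmetric power. -/
noncomputable def SymPow.mk (R : Type*) [CommRing R] (n : ℕ) (M : Type*) [AddCommGroup M] [Module R M] :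
    (⨂[R]^n M) →ₗ[R] SymPow R n M :=
  (symRel R n M).mkQ

/-- The product `v 0 · v 1 · ⋯ · v (n-1)` in the symmetric power `SymPow R n M`. -/
noncomputable def SymPow.prod (R : Type*) [CommRing R] {n : ℕ} {M : Type*} [AddCommGroup M] [Module R M]
    (v : Fin n → M) : SymPow R n M :=
  SymPow.mk R n M (PiTensorProduct.tprod R v)

/-- The wedge `v 0 ∧ v 1 ∧ ⋯ ∧ v (n-1)`, as an element of the `n`-th exterior power
`⋀[R]^n M`. -/
noncomputable def wedgeMk (R : Type*) [CommRing R] {n : ℕ} {M : Type*} [AddCommGroup M] [Module R M]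
    (v : Fin n → M) : ⋀[R]^n M :=
  ⟨ExteriorAlgebra.ιMulti R n v, ExteriorAlgebra.ιMulti_range R n (Set.mem_range_self v)⟩

/-!
For fixed `x₁ y₁ x₂ y₂ : M`, the formula defining `i` is the value at `P · C ∈ Sym²(Symᵐ M)` of
`crossMap x₁ y₁ x₂ y₂ = (x₁y₂ ⊙ x₂y₁) - (x₁x₂ ⊙ y₁y₂)`, where `f ⊙ g = mapPolar f g` sends
`P · C` to `f P · g C + g P · f C` and `uv = mulPair u v` is multiplication by `u v`. This is
4-linear, vanishes when `x₁ = y₁` or `x₂ = y₂` (because `uv = vu` and `f ⊙ g = g ⊙ f`) and is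
invariant under exchanging the two pairs, so it factors through `Sym²(⋀²M)`, and then through
the tensor product.

After `q`, a term `(x y P) · (z w C)` becomes `x y z w P C ∈ Sym^{2m+4} M`, which does not change
when `y` and `w` are exchanged; together with `x y = y x` this carries the two subtracted terms
of the formula onto the two added ones.
-/

section

variable {α : Type*}

lemma Fin.cons_comp_decomposeFin_symm {k : ℕ} (x : α) (f : Fin k → α)
    (σ : Equiv.Perm (Fin k)) :
    Fin.cons x f ∘ Equiv.Perm.decomposeFin.symm (0, σ) = Fin.cons x (f ∘ σ) := by
  ext i
  cases i using Fin.cases <;>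
    simp [Equiv.Perm.decomposeFin_symm_apply_zero, Equiv.Perm.decomposeFin_symm_apply_succ]

lemma Fin.append_comp_swap {k l : ℕ} (u : Fin k → α) (w : Fin l → α) (i : Fin k)
    (j : Fin l) :
    Fin.append u w ∘ Equiv.swap (Fin.castAdd l i) (Fin.natAdd k j) =
      Fin.append (Function.update u i (w j)) (Function.update w j (u i)) := by
  ext x
  refine Fin.addCases (fun x => ?_) (fun x => ?_) x <;> rw [Function.comp_apply]
  · by_cases h : x = i
    · simp [h]
    · rw [Equiv.swap_apply_of_ne_of_ne (by simpa [Fin.ext_iff] using h)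
        (by simp [Fin.ext_iff]; omega)]
      simp [h]
  · by_cases h : x = j
    · simp [h]
    · rw [Equiv.swap_apply_of_ne_of_ne (by simp [Fin.ext_iff]; omega)
        (by simpa [Fin.ext_iff] using h)]
      simp [h]

end

section

variable {R : Type*} [CommRing R] {M N : Type*} [AddCommGroup M] [Module R M]
  [AddCommGroup N] [Module R N]

noncomputable def LinearMap.uncurryFinTwo (b : M →ₗ[R] M →ₗ[R] N) :
    MultilinearMap R (fun _ : Fin 2 => M) N :=
  ((MultilinearMap.ofSubsingletonₗ R R M N (0 : Fin 1)).toLinearMap ∘ₗ b).uncurryLeft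

@[simp]
lemma LinearMap.uncurryFinTwo_apply (b : M →ₗ[R] M →ₗ[R] N) (v : Fin 2 → M) :
    b.uncurryFinTwo v = b (v 0) (v 1) :=
  rfl

end

namespace exteriorPower

variable {R : Type*} [CommRing R] {M N : Type*} [AddCommGroup M] [Module R M]
  [AddCommGroup N] [Module R N]

noncomputable def liftBilin (b : M →ₗ[R] M →ₗ[R] N) (hb : ∀ x, b x x = 0) :
    ⋀[R]^2 M →ₗ[R] N :=
  alternatingMapLinearEquiv
    { b.uncurryFinTwo with
      map_eq_zero_of_eq' := fun v i j hv hij => by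
        have h01 : v 0 = v 1 := by fin_cases i <;> fin_cases j <;> simp_all
        simp [h01, hb] }

@[simp]
lemma liftBilin_ιMulti (b : M →ₗ[R] M →ₗ[R] N) (hb : ∀ x, b x x = 0) (v : Fin 2 → M) :
    liftBilin b hb (ιMulti R 2 v) = b (v 0) (v 1) := by
  simp [liftBilin]

noncomputable def liftBilin₂ (f : M →ₗ[R] M →ₗ[R] M →ₗ[R] M →ₗ[R] N)
    (h₁₂ : ∀ x z w, f x x z w = 0) (h₃₄ : ∀ x y z, f x y z z = 0) :
    ⋀[R]^2 M →ₗ[R] ⋀[R]^2 M →ₗ[R] N :=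
  liftBilin
    (LinearMap.mk₂ R (fun x y => liftBilin (f x y) (h₃₄ x y))
      (fun _ _ _ => by ext; simp) (fun _ _ _ => by ext; simp)
      (fun _ _ _ => by ext; simp) (fun _ _ _ => by ext; simp))
    (fun x => by ext; simp [h₁₂])

@[simp]
lemma liftBilin₂_ιMulti (f : M →ₗ[R] M →ₗ[R] M →ₗ[R] M →ₗ[R] N)
    (h₁₂ : ∀ x z w, f x x z w = 0) (h₃₄ : ∀ x y z, f x y z z = 0) (v w : Fin 2 → M) :
    liftBilin₂ f h₁₂ h₃₄ (ιMulti R 2 v) (ιMulti R 2 w) = f (v 0) (v 1) (w 0) (w 1) := by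
  simp [liftBilin₂]

lemma liftBilin₂_comm (f : M →ₗ[R] M →ₗ[R] M →ₗ[R] M →ₗ[R] N)
    (h₁₂ : ∀ x z w, f x x z w = 0) (h₃₄ : ∀ x y z, f x y z z = 0)
    (hsymm : ∀ x y z w, f x y z w = f z w x y) (w w' : ⋀[R]^2 M) :
    liftBilin₂ f h₁₂ h₃₄ w w' = liftBilin₂ f h₁₂ h₃₄ w' w := by
  have : liftBilin₂ f h₁₂ h₃₄ = (liftBilin₂ f h₁₂ h₃₄).flip := by ext; simp [hsymm]
  exact LinearMap.congr_fun₂ this w w'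

end exteriorPower

namespace SymPow

open exteriorPower

variable {R : Type*} [CommRing R] {M N : Type*} [AddCommGroup M] [Module R M]
  [AddCommGroup N] [Module R N]

variable (R M) in
noncomputable def prodMultilinearMap (n : ℕ) :
    MultilinearMap R (fun _ : Fin n => M) (SymPow R n M) :=
  (SymPow.mk R n M).compMultilinearMap (PiTensorProduct.tprod R)

@[simp]
lemma prodMultilinearMap_apply {n : ℕ} (v : Fin n → M) :
    prodMultilinearMap R M n v = SymPow.prod R v :=
  rfl

lemma prod_comp_perm {n : ℕ} (v : Fin n → M) (σ : Equiv.Perm (Fin n)) :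
    SymPow.prod R (v ∘ σ) = SymPow.prod R v :=
  ((Submodule.Quotient.eq (symRel R n M)).mpr (Submodule.subset_span ⟨σ, v, rfl⟩)).symm

@[ext]
lemma linearMap_ext {n : ℕ} {f g : SymPow R n M →ₗ[R] N}
    (h : f.compMultilinearMap (prodMultilinearMap R M n) =
      g.compMultilinearMap (prodMultilinearMap R M n)) : f = g :=
  Submodule.linearMap_qext _ (PiTensorProduct.ext h)

noncomputable def lift {n : ℕ} (f : MultilinearMap R (fun _ : Fin n => M) N)
    (hf : ∀ (v : Fin n → M) (σ : Equiv.Perm (Fin n)), f (v ∘ σ) = f v) :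
    SymPow R n M →ₗ[R] N :=
  (symRel R n M).liftQ (PiTensorProduct.lift f) <| by
    rw [symRel, Submodule.span_le]
    rintro _ ⟨σ, v, rfl⟩
    simp [hf]

@[simp]
lemma lift_prod {n : ℕ} (f : MultilinearMap R (fun _ : Fin n => M) N)
    (hf : ∀ (v : Fin n → M) (σ : Equiv.Perm (Fin n)), f (v ∘ σ) = f v) (v : Fin n → M) :
    lift f hf (SymPow.prod R v) = f v :=
  PiTensorProduct.lift.tprod v

variable (R M) in
noncomputable def mul₂ : M →ₗ[R] M →ₗ[R] SymPow R 2 M :=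
  (MultilinearMap.ofSubsingletonₗ R R M (SymPow R 2 M) (0 : Fin 1)).symm.toLinearMap ∘ₗ
    (prodMultilinearMap R M 2).curryLeft

lemma mul₂_apply (x y : M) : mul₂ R M x y = SymPow.prod R ![x, y] := by
  refine congrArg (SymPow.prod R) ?_
  ext i
  fin_cases i <;> rfl

lemma mul₂_comm (x y : M) : mul₂ R M x y = mul₂ R M y x := by
  rw [mul₂_apply, mul₂_apply, ← prod_comp_perm ![x, y] (Equiv.swap 0 1),
    Matrix.cons_cons_comp_swap_zero_one]

-- Takes priority over `linearMap_ext`, so that `ext` goes on to the two factors of `x · y`.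
@[ext high]
lemma linearMap_ext₂ {f g : SymPow R 2 M →ₗ[R] N}
    (h : (mul₂ R M).compr₂ f = (mul₂ R M).compr₂ g) : f = g := by
  ext v
  have hv : v = ![v 0, v 1] := by ext i; fin_cases i <;> rfl
  simpa [mul₂_apply, ← hv] using LinearMap.congr_fun₂ h (v 0) (v 1)

noncomputable def lift₂ (b : M →ₗ[R] M →ₗ[R] N) (hb : ∀ x y, b x y = b y x) :
    SymPow R 2 M →ₗ[R] N :=
  lift b.uncurryFinTwo <| by
    intro v σ
    have hσ : σ = 1 ∨ σ = Equiv.swap 0 1 := by revert σ; decide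
    rcases hσ with rfl | rfl
    · rfl
    · exact hb _ _

@[simp]
lemma lift₂_mul₂ (b : M →ₗ[R] M →ₗ[R] N) (hb : ∀ x y, b x y = b y x) (x y : M) :
    lift₂ b hb (mul₂ R M x y) = b x y := by
  simp [lift₂, mul₂_apply]

noncomputable def liftWedge (f : M →ₗ[R] M →ₗ[R] M →ₗ[R] M →ₗ[R] N)
    (h₁₂ : ∀ x z w, f x x z w = 0) (h₃₄ : ∀ x y z, f x y z z = 0)
    (hsymm : ∀ x y z w, f x y z w = f z w x y) : SymPow R 2 (⋀[R]^2 M) →ₗ[R] N :=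
  lift₂ (liftBilin₂ f h₁₂ h₃₄) (liftBilin₂_comm f h₁₂ h₃₄ hsymm)

@[simp]
lemma liftWedge_mul₂ (f : M →ₗ[R] M →ₗ[R] M →ₗ[R] M →ₗ[R] N)
    (h₁₂ : ∀ x z w, f x x z w = 0) (h₃₄ : ∀ x y z, f x y z z = 0)
    (hsymm : ∀ x y z w, f x y z w = f z w x y) (v w : Fin 2 → M) :
    liftWedge f h₁₂ h₃₄ hsymm (mul₂ R _ (ιMulti R 2 v) (ιMulti R 2 w)) =
      f (v 0) (v 1) (w 0) (w 1) := by
  simp [liftWedge]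

variable (R M) in
noncomputable def consConsMultilinearMap (m : ℕ) :
    M →ₗ[R] M →ₗ[R] MultilinearMap R (fun _ : Fin m => M) (SymPow R (m + 2) M) :=
  (multilinearCurryLeftEquiv R (fun _ : Fin (m + 1) => M) _).toLinearMap ∘ₗ
    (prodMultilinearMap R M (m + 2)).curryLeft

@[simp]
lemma consConsMultilinearMap_apply {m : ℕ} (u v : M) (a : Fin m → M) :
    consConsMultilinearMap R M m u v a = SymPow.prod R (Fin.cons u (Fin.cons v a)) :=
  rfl

lemma consConsMultilinearMap_comp_perm {m : ℕ} (u v : M) (a : Fin m → M)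
    (σ : Equiv.Perm (Fin m)) :
    consConsMultilinearMap R M m u v (a ∘ σ) = consConsMultilinearMap R M m u v a := by
  simp only [consConsMultilinearMap_apply, ← Fin.cons_comp_decomposeFin_symm, prod_comp_perm]

variable (R M) in
noncomputable def mulPair (m : ℕ) : M →ₗ[R] M →ₗ[R] SymPow R m M →ₗ[R] SymPow R (m + 2) M :=
  LinearMap.mk₂ R
    (fun u v => lift (consConsMultilinearMap R M m u v) (consConsMultilinearMap_comp_perm u v))
    (fun _ _ _ => by ext; simp [-consConsMultilinearMap_apply])
    (fun _ _ _ => by ext; simp [-consConsMultilinearMap_apply])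
    (fun _ _ _ => by ext; simp [-consConsMultilinearMap_apply])
    (fun _ _ _ => by ext; simp [-consConsMultilinearMap_apply])

@[simp]
lemma mulPair_prod {m : ℕ} (u v : M) (a : Fin m → M) :
    mulPair R M m u v (SymPow.prod R a) = SymPow.prod R (Fin.cons u (Fin.cons v a)) := by
  simp [mulPair]

lemma mulPair_comm {m : ℕ} (u v : M) : mulPair R M m u v = mulPair R M m v u := by
  ext a
  simp only [LinearMap.compMultilinearMap_apply, prodMultilinearMap_apply, mulPair_prod]
  rw [← prod_comp_perm (Fin.cons u (Fin.cons v a)) (Equiv.swap 0 1)]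
  exact congrArg _ (Matrix.cons_cons_comp_swap_zero_one u v a)

noncomputable def mapPolar :
    (M →ₗ[R] N) →ₗ[R] (M →ₗ[R] N) →ₗ[R] SymPow R 2 M →ₗ[R] SymPow R 2 N :=
  LinearMap.mk₂ R
    (fun f g => lift₂ ((mul₂ R N).compl₁₂ f g + (mul₂ R N).compl₁₂ g f) fun p q => by
      simp only [LinearMap.add_apply, LinearMap.compl₁₂_apply]
      rw [mul₂_comm (f p), mul₂_comm (g p), add_comm])
    (fun _ _ _ => by ext; simp; abel) (fun _ _ _ => by ext; simp)
    (fun _ _ _ => by ext; simp; abel) (fun _ _ _ => by ext; simp)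

@[simp]
lemma mapPolar_mul₂ (f g : M →ₗ[R] N) (p q : M) :
    mapPolar f g (mul₂ R M p q) = mul₂ R N (f p) (g q) + mul₂ R N (g p) (f q) := by
  simp [mapPolar]

lemma mapPolar_comm (f g : M →ₗ[R] N) : mapPolar f g = mapPolar g f := by
  ext
  simp [add_comm]

variable (R M) in
noncomputable def crossMap (m : ℕ) : M →ₗ[R] M →ₗ[R] M →ₗ[R] M →ₗ[R]
    SymPow R 2 (SymPow R m M) →ₗ[R] SymPow R 2 (SymPow R (m + 2) M) :=
  LinearMap.mk₂ R
    (fun x₁ y₁ => LinearMap.mk₂ R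
      (fun x₂ y₂ => mapPolar (mulPair R M m x₁ y₂) (mulPair R M m x₂ y₁) -
        mapPolar (mulPair R M m x₁ x₂) (mulPair R M m y₁ y₂))
      (fun _ _ _ => by simp; abel) (fun _ _ _ => by simp [smul_sub])
      (fun _ _ _ => by simp; abel) (fun _ _ _ => by simp [smul_sub]))
    (fun _ _ _ => by ext : 2; simp; abel) (fun _ _ _ => by ext : 2; simp [smul_sub])
    (fun _ _ _ => by ext : 2; simp; abel) (fun _ _ _ => by ext : 2; simp [smul_sub])

lemma crossMap_apply {m : ℕ} (x₁ y₁ x₂ y₂ : M) :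
    crossMap R M m x₁ y₁ x₂ y₂ = mapPolar (mulPair R M m x₁ y₂) (mulPair R M m x₂ y₁) -
      mapPolar (mulPair R M m x₁ x₂) (mulPair R M m y₁ y₂) :=
  rfl

lemma crossMap_self_left {m : ℕ} (x x₂ y₂ : M) : crossMap R M m x x x₂ y₂ = 0 := by
  rw [crossMap_apply, mulPair_comm x₂ x, mapPolar_comm, sub_self]

lemma crossMap_self_right {m : ℕ} (x₁ y₁ x : M) : crossMap R M m x₁ y₁ x x = 0 := by
  rw [crossMap_apply, mulPair_comm x y₁, mapPolar_comm, sub_self]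

lemma crossMap_comm {m : ℕ} (x₁ y₁ x₂ y₂ : M) :
    crossMap R M m x₁ y₁ x₂ y₂ = crossMap R M m x₂ y₂ x₁ y₁ := by
  rw [crossMap_apply, crossMap_apply, mapPolar_comm (mulPair R M m x₂ y₁), mulPair_comm x₂ x₁,
    mulPair_comm y₂ y₁]

lemma prod_append_cons_cons_swap {k l : ℕ} (x y z w : M) (a : Fin k → M) (c : Fin l → M) :
    SymPow.prod R (Fin.append (Fin.cons x (Fin.cons y a)) (Fin.cons z (Fin.cons w c))) =
      SymPow.prod R (Fin.append (Fin.cons x (Fin.cons w a)) (Fin.cons z (Fin.cons y c))) := by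
  rw [← prod_comp_perm _ (Equiv.swap (Fin.castAdd _ (Fin.succ 0)) (Fin.natAdd _ (Fin.succ 0))),
    Fin.append_comp_swap]
  simp only [← Fin.cons_update, Fin.update_cons_zero, Fin.cons_succ, Fin.cons_zero]

variable (R M) in
noncomputable def iMap (m : ℕ) :
    SymPow R 2 (⋀[R]^2 M) ⊗[R] SymPow R 2 (SymPow R m M) →ₗ[R]
      SymPow R 2 (SymPow R (m + 2) M) :=
  TensorProduct.lift
    (liftWedge (crossMap R M m) crossMap_self_left crossMap_self_right crossMap_comm)

@[simp]
lemma wedgeMk_eq_ιMulti {n : ℕ} (v : Fin n → M) : wedgeMk R v = ιMulti R n v :=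
  rfl

lemma iMap_tmul {m : ℕ} (x₁ y₁ x₂ y₂ : M) (a c : Fin m → M) :
    iMap R M m ((SymPow.prod R ![wedgeMk R ![x₁, y₁], wedgeMk R ![x₂, y₂]]) ⊗ₜ[R]
        (SymPow.prod R ![SymPow.prod R a, SymPow.prod R c])) =
      SymPow.prod R ![SymPow.prod R (Fin.cons x₁ (Fin.cons y₂ a)),
          SymPow.prod R (Fin.cons x₂ (Fin.cons y₁ c))]
        + SymPow.prod R ![SymPow.prod R (Fin.cons x₂ (Fin.cons y₁ a)),
            SymPow.prod R (Fin.cons x₁ (Fin.cons y₂ c))]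
        - SymPow.prod R ![SymPow.prod R (Fin.cons x₁ (Fin.cons x₂ a)),
            SymPow.prod R (Fin.cons y₁ (Fin.cons y₂ c))]
        - SymPow.prod R ![SymPow.prod R (Fin.cons y₁ (Fin.cons y₂ a)),
            SymPow.prod R (Fin.cons x₁ (Fin.cons x₂ c))] := by
  simp only [← mul₂_apply]
  simp [iMap, crossMap_apply, sub_add_eq_sub_sub]

lemma apply_mul₂_mulPair_swap {m : ℕ}
    {q : SymPow R 2 (SymPow R (m + 2) M) →ₗ[R] SymPow R ((m + 2) + (m + 2)) M}
    (hq : ∀ a c : Fin (m + 2) → M,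
      q (SymPow.prod R ![SymPow.prod R a, SymPow.prod R c]) = SymPow.prod R (Fin.append a c))
    (x y z w : M) (a c : Fin m → M) :
    q (mul₂ R _ (mulPair R M m x y (prod R a)) (mulPair R M m z w (prod R c))) =
      q (mul₂ R _ (mulPair R M m x w (prod R a)) (mulPair R M m z y (prod R c))) := by
  simp only [mulPair_prod, mul₂_apply, hq, prod_append_cons_cons_swap x y z w]

lemma apply_crossMap_eq_zero {m : ℕ}
    {q : SymPow R 2 (SymPow R (m + 2) M) →ₗ[R] SymPow R ((m + 2) + (m + 2)) M}
    (hq : ∀ a c : Fin (m + 2) → M,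
      q (SymPow.prod R ![SymPow.prod R a, SymPow.prod R c]) = SymPow.prod R (Fin.append a c))
    (x₁ y₁ x₂ y₂ : M) (a c : Fin m → M) :
    q (crossMap R M m x₁ y₁ x₂ y₂ (mul₂ R _ (prod R a) (prod R c))) = 0 := by
  rw [crossMap_apply, LinearMap.sub_apply, mapPolar_mul₂, mapPolar_mul₂, map_sub, map_add,
    map_add, apply_mul₂_mulPair_swap hq x₁ x₂ y₁ y₂, apply_mul₂_mulPair_swap hq y₁ y₂ x₁ x₂,
    mulPair_comm y₁ x₂, sub_self]

lemma comp_iMap_eq_zero {m : ℕ}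
    {q : SymPow R 2 (SymPow R (m + 2) M) →ₗ[R] SymPow R ((m + 2) + (m + 2)) M}
    (hq : ∀ a c : Fin (m + 2) → M,
      q (SymPow.prod R ![SymPow.prod R a, SymPow.prod R c]) = SymPow.prod R (Fin.append a c)) :
    q ∘ₗ iMap R M m = 0 := by
  refine TensorProduct.ext ?_
  ext v w a c
  simp [iMap, apply_crossMap_eq_zero hq]

end SymPow

theorem stmt12_general {R M : Type*} [CommRing R] [AddCommGroup M] [Module R M]
    (m : ℕ) :
    ∃ i : (SymPow R 2 (⋀[R]^2 M)) ⊗[R] (SymPow R 2 (SymPow R m M)) →ₗ[R]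
        SymPow R 2 (SymPow R (m + 2) M),
      (∀ (x₁ y₁ x₂ y₂ : M) (a c : Fin m → M),
        i ((SymPow.prod R ![wedgeMk R ![x₁, y₁], wedgeMk R ![x₂, y₂]]) ⊗ₜ[R]
            (SymPow.prod R ![SymPow.prod R a, SymPow.prod R c])) =
          SymPow.prod R ![SymPow.prod R (Fin.cons x₁ (Fin.cons y₂ a)),
              SymPow.prod R (Fin.cons x₂ (Fin.cons y₁ c))]
          + SymPow.prod R ![SymPow.prod R (Fin.cons x₂ (Fin.cons y₁ a)),
              SymPow.prod R (Fin.cons x₁ (Fin.cons y₂ c))]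
          - SymPow.prod R ![SymPow.prod R (Fin.cons x₁ (Fin.cons x₂ a)),
              SymPow.prod R (Fin.cons y₁ (Fin.cons y₂ c))]
          - SymPow.prod R ![SymPow.prod R (Fin.cons y₁ (Fin.cons y₂ a)),
              SymPow.prod R (Fin.cons x₁ (Fin.cons x₂ c))]) ∧
      ∀ q : SymPow R 2 (SymPow R (m + 2) M) →ₗ[R] SymPow R ((m + 2) + (m + 2)) M,
        (∀ a c : Fin (m + 2) → M,
          q (SymPow.prod R ![SymPow.prod R a, SymPow.prod R c]) =
            SymPow.prod R (Fin.append a c)) →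
        q ∘ₗ i = 0 := by
  exact ⟨SymPow.iMap R M m, SymPow.iMap_tmul, fun _ hq => SymPow.comp_iMap_eq_zero hq⟩

theorem stmt12 {R M : Type*} [CommRing R] [AddCommGroup M] [Module R M]
    (m : ℕ) (hm : 1 ≤ m) :
    ∃ i : (SymPow R 2 (⋀[R]^2 M)) ⊗[R] (SymPow R 2 (SymPow R m M)) →ₗ[R]
        SymPow R 2 (SymPow R (m + 2) M),
      (∀ (x₁ y₁ x₂ y₂ : M) (a c : Fin m → M),
        i ((SymPow.prod R ![wedgeMk R ![x₁, y₁], wedgeMk R ![x₂, y₂]]) ⊗ₜ[R]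
            (SymPow.prod R ![SymPow.prod R a, SymPow.prod R c])) =
          SymPow.prod R ![SymPow.prod R (Fin.cons x₁ (Fin.cons y₂ a)),
              SymPow.prod R (Fin.cons x₂ (Fin.cons y₁ c))]
          + SymPow.prod R ![SymPow.prod R (Fin.cons x₂ (Fin.cons y₁ a)),
              SymPow.prod R (Fin.cons x₁ (Fin.cons y₂ c))]
          - SymPow.prod R ![SymPow.prod R (Fin.cons x₁ (Fin.cons x₂ a)),
              SymPow.prod R (Fin.cons y₁ (Fin.cons y₂ c))]
          - SymPow.prod R ![SymPow.prod R (Fin.cons y₁ (Fin.cons y₂ a)),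
              SymPow.prod R (Fin.cons x₁ (Fin.cons x₂ c))]) ∧
      ∀ q : SymPow R 2 (SymPow R (m + 2) M) →ₗ[R] SymPow R ((m + 2) + (m + 2)) M,
        (∀ a c : Fin (m + 2) → M,
          q (SymPow.prod R ![SymPow.prod R a, SymPow.prod R c]) =
            SymPow.prod R (Fin.append a c)) →
        q ∘ₗ i = 0 :=
  stmt12_general m
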